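/- Let p be an odd prime and let H = A ⋊ ⟨b⟩, where A = {v ∈ 𝔽_p^p : Σvᵢ = 0} and b = (1 2 ... p) acts by cyclic shift. Then the center of H is cyclic of order p, generated by the element of A whose coordinates in the basis c₁, ..., c_{p−1} are (1, 2, ..., p−1). -/

import Mathlib

open Equiv Multiplicative Polynomial

/-- Coordinate-permutation automorphism of the base group. -/
def permAut (p q : ℕ) (σ : Equiv.Perm (Fin q)) :
    MulAut (Fin q → Multiplicative (ZMod p)) where
  toFun v := v ∘ σ.symm
  invFun v := v ∘ σ
  left_inv v := by funext i; simp
  right_inv v := by funext i; simp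
  map_mul' v w := rfl

/-- The action of `Sym(q)` on the base group of the wreath product. -/
def wreathAct (p q : ℕ) :
    Equiv.Perm (Fin q) →* MulAut (Fin q → Multiplicative (ZMod p)) where
  toFun := permAut p q
  map_one' := rfl
  map_mul' σ τ := rfl

/-- The wreath product `C_p ≀ Sym(q)`. -/
abbrev Wreath (p q : ℕ) :=
  (Fin q → Multiplicative (ZMod p)) ⋊[wreathAct p q] Equiv.Perm (Fin q)

/-- The complex reflection group `G(p,p,q)` as a subgroup of `C_p ≀ Sym(q)`. -/
def Gppq (p q : ℕ) : Subgroup (Wreath p q) where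
  carrier := {g | ∑ i, Multiplicative.toAdd (g.left i) = 0}
  one_mem' := by simp
  mul_mem' := by
    intro a b ha hb
    simp only [Set.mem_setOf_eq, SemidirectProduct.mul_left] at *
    have : ∑ i, toAdd ((wreathAct p q a.right b.left) i) = 0 := by
      have := Equiv.sum_comp a.right.symm (fun i => toAdd (b.left i))
      change ∑ i, toAdd (b.left (a.right.symm i)) = 0
      exact this.trans hb
    simp [Pi.mul_apply, toAdd_mul, Finset.sum_add_distrib, ha, this]
  inv_mem' := by
    intro a ha
    simp only [Set.mem_setOf_eq, SemidirectProduct.inv_left] at *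
    have h := Equiv.sum_comp a.right (fun i => toAdd (a.left⁻¹ i))
    have h2 : ∑ i, toAdd (a.left⁻¹ i) = 0 := by
      simp [toAdd_inv, Finset.sum_neg_distrib, ha]
    simp only [wreathAct, permAut, map_inv]
    change ∑ i, toAdd (a.left⁻¹ (a.right i)) = 0
    exact h.trans h2


/-- The subgroup `H = A ⋊ ⟨b⟩` of the wreath product, where `b` is the cyclic
shift `(1 2 … q)`. -/
def Hgrp (p q : ℕ) : Subgroup (Wreath p q) where
  carrier := {g | ∑ i, Multiplicative.toAdd (g.left i) = 0 ∧
    g.right ∈ Subgroup.zpowers (finRotate q)}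
  one_mem' := ⟨(Gppq p q).one_mem, Subgroup.one_mem _⟩
  mul_mem' := by
    intro a b ha hb
    exact ⟨(Gppq p q).mul_mem ha.1 hb.1, by
      simpa using Subgroup.mul_mem _ ha.2 hb.2⟩
  inv_mem' := by
    intro a ha
    exact ⟨(Gppq p q).inv_mem ha.1, by simpa using Subgroup.inv_mem _ ha.2⟩

/-!
A central element commutes with the rotation `b`, so its coordinates are invariant under the
cyclic shift, hence constant. It also commutes with every zero-sum vector `v`, so its permutation
part `σ` satisfies `v ∘ σ⁻¹ = v`; testing `v = eᵢ - e_{σ i}` gives `-1 = 1` unless `σ i = i`, which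
is impossible in odd characteristic. Conversely constant vectors have coordinate sum `p • c = 0`
and are central in the whole wreath product, so the center is the diagonal copy of `ℤ/p`. The
given element is the all-ones vector: its `j`-th coordinate telescopes to `(j + 1) - j`.
-/

theorem Equiv.Perm.eq_one_of_forall_sum_eq_zero_comp_eq {ι R : Type*} [Fintype ι] [DecidableEq ι]
    [CommRing R] (h2 : (2 : R) ≠ 0) {σ : Perm ι} (h : ∀ w : ι → R, ∑ i, w i = 0 → w ∘ σ = w) :
    σ = 1 := by
  ext i
  by_contra hne
  rw [Perm.one_apply] at hne
  have hw := congrFun (h (Pi.single i 1 - Pi.single (σ i) 1) (by simp)) i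
  simp only [Function.comp_apply, Pi.sub_apply, Pi.single_apply, if_pos, hne, Ne.symm hne,
    if_false] at hw
  exact h2 (by linear_combination -hw)

theorem Equiv.Perm.apply_pow_eq_of_comp_eq {α β : Type*} {σ : Perm α} {f : α → β} (h : f ∘ σ = f)
    (k : ℕ) (x : α) : f ((σ ^ k) x) = f x := by
  induction k generalizing x with
  | zero => rfl
  | succ k ih => rw [pow_succ, Perm.mul_apply, ih]; exact congrFun h x

theorem eq_of_comp_finRotate_symm_eq {n : ℕ} {β : Type*} {f : Fin n → β}
    (h : f ∘ (finRotate n).symm = f) (i j : Fin n) : f i = f j := by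
  rcases le_or_gt n 1 with hn | hn
  · exact congrArg f ((Fin.subsingleton_iff_le_one.mpr hn).elim i j)
  obtain ⟨m, rfl⟩ := Nat.exists_eq_add_of_le' hn
  have hcyc : (finRotate (m + 2))⁻¹.IsCycle := isCycle_finRotate.inv
  have hsupp : ∀ x, (finRotate (m + 2))⁻¹ x ≠ x := fun x => by
    simp only [Perm.coe_inv, finRotate_symm_apply, ne_eq, sub_eq_self, one_ne_zero,
      not_false_eq_true]
  obtain ⟨k, rfl⟩ := hcyc.exists_pow_eq (hsupp j) (hsupp i)
  exact Perm.apply_pow_eq_of_comp_eq h k j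

theorem ZMod.two_ne_zero_of_odd {p : ℕ} (hp : Odd p) (hp1 : p ≠ 1) : (2 : ZMod p) ≠ 0 := by
  intro h
  have hdvd : p ∣ 2 := (ZMod.natCast_eq_zero_iff 2 p).mp (by exact_mod_cast h)
  rcases (Nat.dvd_prime Nat.prime_two).mp hdvd with rfl | rfl
  · exact hp1 rfl
  · exact absurd hp (by decide)

namespace Wreath

variable {p q : ℕ}

theorem left_comp_symm_eq_of_commute_inr {σ : Perm (Fin q)} {g : Wreath p q}
    (h : Commute (SemidirectProduct.inr σ) g) : g.left ∘ σ.symm = g.left := by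
  have := congrArg SemidirectProduct.left h.eq
  simp only [SemidirectProduct.mul_left, SemidirectProduct.left_inr, SemidirectProduct.right_inr,
    map_one, one_mul, mul_one] at this
  exact this

theorem comp_symm_eq_of_commute_inl {v : Fin q → Multiplicative (ZMod p)} {g : Wreath p q}
    (h : Commute (SemidirectProduct.inl v) g) : v ∘ g.right.symm = v := by
  have := congrArg SemidirectProduct.left h.eq
  simp only [SemidirectProduct.mul_left, SemidirectProduct.left_inl, SemidirectProduct.right_inl,
    map_one, MulAut.one_apply] at this
  exact mul_left_cancel (this.symm.trans (mul_comm _ _))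

def diagHom (p : ℕ) : Multiplicative (ZMod p) →* Wreath p p :=
  SemidirectProduct.inl.comp (Pi.constMonoidHom (Fin p) _)

theorem diagHom_apply (p : ℕ) (c : Multiplicative (ZMod p)) :
    diagHom p c = SemidirectProduct.inl (fun _ => c) := rfl

theorem diagHom_injective [NeZero p] : Function.Injective (diagHom p) := fun _ _ h =>
  congrFun (SemidirectProduct.inl_injective h) 0

theorem diagHom_mem_Hgrp (c : Multiplicative (ZMod p)) : diagHom p c ∈ Hgrp p p :=
  ⟨by simp [diagHom_apply], by simp [diagHom_apply]⟩

theorem commute_diagHom (c : Multiplicative (ZMod p)) (g : Wreath p p) :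
    Commute (diagHom p c) g := by
  ext i
  · simp only [diagHom_apply, SemidirectProduct.mul_left, SemidirectProduct.left_inl,
      SemidirectProduct.right_inl, map_one, MulAut.one_apply]
    exact mul_comm c (g.left i)
  · simp [diagHom_apply]

theorem range_diagHom : (diagHom p).range = Subgroup.zpowers (diagHom p (ofAdd 1)) := by
  rw [← MonoidHom.map_zpowers, MonoidHom.range_eq_map, eq_comm]
  congr
  refine (Subgroup.eq_top_iff' _).mpr fun c => Subgroup.mem_zpowers_iff.mpr ⟨(toAdd c).cast, ?_⟩
  rw [← ofAdd_zsmul, zsmul_one, ZMod.intCast_cast, ZMod.cast_id', id, ofAdd_toAdd]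

theorem mem_center_Hgrp_iff (hp : Odd p) {g : Hgrp p p} :
    g ∈ Subgroup.center (Hgrp p p) ↔ (g : Wreath p p) ∈ (diagHom p).range := by
  constructor
  · intro hg
    have hcomm (h : Hgrp p p) : Commute (h : Wreath p p) g :=
      congrArg Subtype.val (Subgroup.mem_center_iff.mp hg h)
    have hrot : SemidirectProduct.inr (finRotate p) ∈ Hgrp p p := ⟨by simp, Subgroup.mem_zpowers _⟩
    have hconst :=
      eq_of_comp_finRotate_symm_eq (left_comp_symm_eq_of_commute_inr (hcomm ⟨_, hrot⟩))
    have hright : (g : Wreath p p).right = 1 := by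
      rcases subsingleton_or_nontrivial (Fin p) with _ | hnt
      · exact Subsingleton.elim _ _
      have hp1 : p ≠ 1 := by have := Fin.nontrivial_iff_two_le.mp hnt; omega
      refine inv_eq_one.mp <| Perm.eq_one_of_forall_sum_eq_zero_comp_eq
        (ZMod.two_ne_zero_of_odd hp hp1) fun w hw => ?_
      have hmem : SemidirectProduct.inl (ofAdd ∘ w) ∈ Hgrp p p := ⟨by simpa using hw, by simp⟩
      funext i
      exact congrArg toAdd (congrFun (comp_symm_eq_of_commute_inl (hcomm ⟨_, hmem⟩)) i)
    have : NeZero p := ⟨hp.pos.ne'⟩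
    refine ⟨(g : Wreath p p).left 0, ?_⟩
    ext i <;> simp [diagHom_apply, hconst i 0, hright]
  · rintro ⟨c, hc⟩
    refine Subgroup.mem_center_iff.mpr fun h => Subtype.ext ?_
    rw [Subgroup.coe_mul, Subgroup.coe_mul, ← hc]
    exact (commute_diagHom c h).symm.eq

theorem map_subtype_center_Hgrp (hp : Odd p) :
    (Subgroup.center (Hgrp p p)).map (Hgrp p p).subtype = (diagHom p).range := by
  ext x
  constructor
  · rintro ⟨g, hg, rfl⟩
    exact (mem_center_Hgrp_iff hp).mp hg
  · rintro ⟨c, rfl⟩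
    exact ⟨⟨_, diagHom_mem_Hgrp c⟩, (mem_center_Hgrp_iff hp).mpr ⟨c, rfl⟩, rfl⟩

noncomputable def centerHgrpEquiv (hp : Odd p) :
    Subgroup.center (Hgrp p p) ≃* Multiplicative (ZMod p) :=
  have : NeZero p := ⟨hp.pos.ne'⟩
  ((Subgroup.equivMapOfInjective _ _ (Hgrp p p).subtype_injective).trans
    (MulEquiv.subgroupCongr (map_subtype_center_Hgrp hp))).trans
    (MonoidHom.ofInjective diagHom_injective).symm

end Wreath

theorem sum_range_smul_telescope_eq_one (p : ℕ) :
    (∑ k ∈ Finset.range (p - 1), ((k + 1 : ℕ) : ZMod p) •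
      (fun j : Fin p => if (j : ℕ) = k then (1 : ZMod p)
        else if (j : ℕ) = k + 1 then -1 else 0)) = fun _ => 1 := by
  funext j
  have hp : p - 1 + 1 = p := Nat.sub_add_cancel (Nat.one_le_of_lt j.isLt)
  have hterm (k : ℕ) : ((k + 1 : ℕ) : ZMod p) * (if (j : ℕ) = k then 1
      else if (j : ℕ) = k + 1 then -1 else 0) =
      (if (j : ℕ) = k then ((k + 1 : ℕ) : ZMod p) else 0) -
        if (j : ℕ) = k + 1 then ((k + 1 : ℕ) : ZMod p) else 0 := by
    split_ifs <;> first | omega | ring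
  have hfirst : ∑ k ∈ Finset.range (p - 1), (if (j : ℕ) = k then ((k + 1 : ℕ) : ZMod p) else 0) =
      ((j + 1 : ℕ) : ZMod p) := by
    rw [Finset.sum_ite_eq]
    split_ifs with hj
    · rfl
    · rw [show (j + 1 : ℕ) = p by rw [Finset.mem_range] at hj; omega, ZMod.natCast_self]
  have hsecond : ∑ k ∈ Finset.range (p - 1),
      (if (j : ℕ) = k + 1 then ((k + 1 : ℕ) : ZMod p) else 0) = (j : ZMod p) := by
    have := Finset.sum_range_succ' (fun m => if (j : ℕ) = m then (m : ZMod p) else 0) (p - 1)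
    rw [hp, Finset.sum_ite_eq, if_pos (Finset.mem_range.mpr j.isLt)] at this
    simpa using this.symm
  simp only [Finset.sum_apply, Pi.smul_apply, smul_eq_mul, hterm, Finset.sum_sub_distrib, hfirst,
    hsecond]
  push_cast
  ring

theorem stmt16_general (p : ℕ) (hop : Odd p) :
    let z : Fin p → ZMod p := ∑ k ∈ Finset.range (p - 1), ((k + 1 : ℕ) : ZMod p) •
      (fun j : Fin p => if (j : ℕ) = k then (1 : ZMod p)
        else if (j : ℕ) = k + 1 then -1 else 0)
    let zw : Wreath p p := SemidirectProduct.inl (fun i => Multiplicative.ofAdd (z i))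
    Nat.card (Subgroup.center ↥(Hgrp p p)) = p ∧
      IsCyclic ↥(Subgroup.center ↥(Hgrp p p)) ∧
      (Subgroup.center ↥(Hgrp p p)).map (Hgrp p p).subtype =
        Subgroup.zpowers zw := by
  intro z zw
  have hzw : zw = Wreath.diagHom p (ofAdd 1) := by
    simp only [zw, z, sum_range_smul_telescope_eq_one, Wreath.diagHom_apply]
  refine ⟨?_, ?_, ?_⟩
  · rw [Nat.card_congr (Wreath.centerHgrpEquiv hop).toEquiv, Nat.card_congr Multiplicative.toAdd,
      Nat.card_zmod]
  · exact isCyclic_of_surjective _ (Wreath.centerHgrpEquiv hop).symm.surjective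
  · rw [Wreath.map_subtype_center_Hgrp hop, Wreath.range_diagHom, hzw]

theorem stmt16 (p : ℕ) (hp : p.Prime) (hop : Odd p) :
    let z : Fin p → ZMod p := ∑ k ∈ Finset.range (p - 1), ((k + 1 : ℕ) : ZMod p) •
      (fun j : Fin p => if (j : ℕ) = k then (1 : ZMod p)
        else if (j : ℕ) = k + 1 then -1 else 0)
    let zw : Wreath p p := SemidirectProduct.inl (fun i => Multiplicative.ofAdd (z i))
    Nat.card (Subgroup.center ↥(Hgrp p p)) = p ∧
      IsCyclic ↥(Subgroup.center ↥(Hgrp p p)) ∧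
      (Subgroup.center ↥(Hgrp p p)).map (Hgrp p p).subtype =
        Subgroup.zpowers zw :=
  stmt16_general p hop
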